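/- arXiv:1408.1070 — 11 statements merged into one kernel-verified Lean document; each statement's English description precedes it below -/
import Mathlib

section
/- Let G be an abelian lattice-ordered group and u > 0 in G. Then the subgroup of G generated by the segment [0,u] equals the set {x ∈ G : ∃ n ≥ 0, |x| ≤ n • u}. -/
/-!
Every element of `[0, u]` has absolute value at most `u`, and `|a + b| ≤ |a| + |b|`, so the
subgroup generated by `[0, u]` consists of elements bounded by multiples of `u`. Conversely,
write `x = x⁺ - x⁻` with `0 ≤ x⁺, x⁻ ≤ |x| ≤ n • u`; an element `y ∈ [0, (n + 1) • u]` splits as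
`y = y ⊓ u + (y - u)⁺` with `y ⊓ u ∈ [0, u]` and `(y - u)⁺ ∈ [0, n • u]`, so induction on `n` puts
it in the subgroup.
-/

namespace AddSubgroup

variable {G : Type*} [Lattice G] [AddCommGroup G] [AddLeftMono G]

theorem Icc_zero_nsmul_subset_closure_Icc {u : G} (hu : 0 ≤ u) (n : ℕ) :
    Set.Icc 0 (n • u) ⊆ closure (Set.Icc 0 u) := by
  induction n with
  | zero =>
    intro y hy
    rw [zero_smul, Set.Icc_self, Set.mem_singleton_iff] at hy
    rw [hy]
    exact zero_mem _
  | succ n ih =>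
    rintro y ⟨hy₀, hy⟩
    have hinf : y ⊓ u ∈ Set.Icc 0 u := ⟨le_inf hy₀ hu, inf_le_right⟩
    have hpos : (y - u)⁺ ∈ Set.Icc 0 (n • u) := by
      refine ⟨posPart_nonneg _, sup_le ?_ (nsmul_nonneg hu n)⟩
      rw [sub_le_iff_le_add, ← succ_nsmul]
      exact hy
    rw [← sub_add_cancel y (y - u)⁺, ← inf_eq_sub_posPart_sub]
    exact add_mem (subset_closure hinf) (ih hpos)

theorem exists_abs_le_nsmul_of_mem_closure_Icc {u x : G}
    (hx : x ∈ closure (Set.Icc 0 u)) : ∃ n : ℕ, |x| ≤ n • u := by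
  induction hx using closure_induction with
  | mem a ha =>
    refine ⟨1, ?_⟩
    rw [one_smul]
    exact sup_le ha.2 ((neg_nonpos.mpr ha.1).trans (ha.1.trans ha.2))
  | zero => exact ⟨0, by simp⟩
  | add a b _ _ iha ihb =>
    obtain ⟨m, hm⟩ := iha
    obtain ⟨n, hn⟩ := ihb
    refine ⟨m + n, ?_⟩
    calc |a + b| ≤ |a| + |b| := abs_add_le a b
      _ ≤ m • u + n • u := add_le_add hm hn
      _ = (m + n) • u := (add_nsmul u m n).symm
  | neg a _ iha => simpa only [abs_neg] using iha

theorem mem_closure_Icc_of_abs_le_nsmul {u x : G} (hu : 0 ≤ u) {n : ℕ} (hx : |x| ≤ n • u) :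
    x ∈ closure (Set.Icc 0 u) := by
  have hpos : x⁺ ≤ |x| := posPart_add_negPart x ▸ le_add_of_nonneg_right (negPart_nonneg x)
  have hneg : x⁻ ≤ |x| := posPart_add_negPart x ▸ le_add_of_nonneg_left (posPart_nonneg x)
  rw [← posPart_sub_negPart x]
  exact sub_mem
    (Icc_zero_nsmul_subset_closure_Icc hu n ⟨posPart_nonneg x, hpos.trans hx⟩)
    (Icc_zero_nsmul_subset_closure_Icc hu n ⟨negPart_nonneg x, hneg.trans hx⟩)

end AddSubgroup

theorem closure_Icc_eq_bounded {G : Type*} [Lattice G] [AddCommGroup G]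
    [CovariantClass G G (· + ·) (· ≤ ·)] (u : G) (hu : 0 < u) :
    (AddSubgroup.closure (Set.Icc (0 : G) u) : Set G)
      = {x : G | ∃ n : ℕ, x ⊔ (-x) ≤ n • u} := by
  ext x
  exact ⟨AddSubgroup.exists_abs_le_nsmul_of_mem_closure_Icc,
    fun ⟨_, hx⟩ => AddSubgroup.mem_closure_Icc_of_abs_le_nsmul hu.le hx⟩
end

section
/- Let G be a totally ordered abelian group, u > 0 in G, and x ∈ G with 0 ≤ x ≤ n • u for some n ≥ 1. Define a_k = ((x - k • u) ⊓ u) ⊔ 0 for 0 ≤ k ≤ n-1. Then x = a_0 + a_1 + ⋯ + a_{n-1}. -/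
/-!
Writing `t k = x ⊓ k • u`, the `k`-th summand is the increment `t (k + 1) - t k`, so the sum
telescopes to `t n - t 0 = x - 0`. The increment formula holds in any lattice-ordered abelian
group, via `(p ⊓ a) + (p ⊔ a) = p + a`.
-/

theorem inf_sub_inf_of_le {G : Type*} [Lattice G] [AddCommGroup G] [AddLeftMono G]
    {a b : G} (hab : a ≤ b) (x : G) :
    x ⊓ b - x ⊓ a = ((x - a) ⊓ (b - a)) ⊔ 0 := by
  have hinf : x ⊓ b ⊓ a = x ⊓ a := by rw [inf_assoc, inf_eq_right.mpr hab]
  have hsum : x ⊓ a + (x ⊓ b ⊔ a) = x ⊓ b + a := by rw [← hinf, inf_add_sup]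
  calc x ⊓ b - x ⊓ a = (x ⊓ b ⊔ a) - a := by rw [sub_eq_sub_iff_add_eq_add, ← hsum, add_comm]
    _ = ((x - a) ⊓ (b - a)) ⊔ 0 := by rw [sup_sub, sub_self, inf_sub]

theorem sum_truncations_eq_general {G : Type*} [AddCommGroup G] [LinearOrder G]
    [IsOrderedAddMonoid G]
    (u : G) (hu : 0 < u) (n : ℕ) (x : G)
    (hx0 : 0 ≤ x) (hxn : x ≤ n • u) :
    x = ∑ k ∈ Finset.range n, (((x - k • u) ⊓ u) ⊔ 0) := by
  calc x = x ⊓ n • u - x ⊓ (0 : ℕ) • u := by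
        rw [zero_smul, inf_eq_right.mpr hx0, inf_eq_left.mpr hxn, sub_zero]
    _ = ∑ k ∈ Finset.range n, (x ⊓ (k + 1) • u - x ⊓ k • u) :=
        (Finset.sum_range_sub (fun k => x ⊓ k • u) n).symm
    _ = ∑ k ∈ Finset.range n, (((x - k • u) ⊓ u) ⊔ 0) := by
        refine Finset.sum_congr rfl fun k _ => ?_
        rw [inf_sub_inf_of_le (nsmul_le_nsmul_left hu.le k.le_succ), succ_nsmul,
          add_sub_cancel_left]

theorem sum_truncations_eq {G : Type*} [AddCommGroup G] [LinearOrder G]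
    [IsOrderedAddMonoid G]
    (u : G) (hu : 0 < u) (n : ℕ) (hn : 1 ≤ n) (x : G)
    (hx0 : 0 ≤ x) (hxn : x ≤ n • u) :
    x = ∑ k ∈ Finset.range n, (((x - k • u) ⊓ u) ⊔ 0) :=
  sum_truncations_eq_general u hu n x hx0 hxn
end

section
/- Let G be a totally ordered abelian group, u > 0, 0 ≤ x ≤ n • u, and a_k = ((x - k • u) ⊓ u) ⊔ 0 for 0 ≤ k ≤ n-1. Then for each k < n-1, (a_k + a_{k+1}) ⊓ u = a_k (equivalently, the truncated sum a_k ⊕ a_{k+1} in the MV-algebra [0,u] equals a_k), i.e., the sequence (a_k) is a good sequence. -/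
section Truncation

variable {G : Type*} [Lattice G] [Zero G]

def truncate (u y : G) : G := (y ⊓ u) ⊔ 0

lemma truncate_nonneg (u y : G) : 0 ≤ truncate u y := le_sup_right

lemma truncate_le {u : G} (hu : 0 ≤ u) (y : G) : truncate u y ≤ u := sup_le inf_le_right hu

lemma truncate_of_nonpos (u : G) {y : G} (hy : y ≤ 0) : truncate u y = 0 :=
  sup_eq_right.mpr (inf_le_left.trans hy)

lemma truncate_of_le {u y : G} (hu : 0 ≤ u) (hy : u ≤ y) : truncate u y = u := by
  rw [truncate, inf_eq_right.mpr hy, sup_eq_left.mpr hu]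

end Truncation

theorem truncate_add_truncate_sub_inf {G : Type*} [AddCommGroup G] [LinearOrder G]
    [IsOrderedAddMonoid G] {u : G} (hu : 0 ≤ u) (y : G) :
    (truncate u y + truncate u (y - u)) ⊓ u = truncate u y := by
  rcases le_total y u with hyu | huy
  · rw [truncate_of_nonpos u (sub_nonpos.mpr hyu), add_zero, inf_eq_left.mpr (truncate_le hu y)]
  · rw [truncate_of_le hu huy, inf_eq_right.mpr (le_add_of_nonneg_right (truncate_nonneg u _))]

theorem truncations_good_sequence_general {G : Type*} [AddCommGroup G] [LinearOrder G] [IsOrderedAddMonoid G]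
    (u : G) (hu : 0 < u) (n : ℕ) (x : G)
    (a : ℕ → G) (ha : ∀ k, a k = ((x - k • u) ⊓ u) ⊔ 0) :
    ∀ k, k + 1 < n → (a k + a (k + 1)) ⊓ u = a k := by
  intro k _
  have hshift : x - (k + 1) • u = x - k • u - u := by rw [succ_nsmul, sub_add_eq_sub_sub]
  rw [ha, ha, hshift]
  exact truncate_add_truncate_sub_inf hu.le (x - k • u)

theorem truncations_good_sequence {G : Type*} [AddCommGroup G] [LinearOrder G] [IsOrderedAddMonoid G]
    (u : G) (hu : 0 < u) (n : ℕ) (hn : 1 ≤ n) (x : G)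
    (hx0 : 0 ≤ x) (hxn : x ≤ n • u)
    (a : ℕ → G) (ha : ∀ k, a k = ((x - k • u) ⊓ u) ⊔ 0) :
    ∀ k, k + 1 < n → (a k + a (k + 1)) ⊓ u = a k :=
  truncations_good_sequence_general u hu n x a ha
end

section
/- Let (G,u) be an abelian lattice-ordered group with strong unit u. The segment Γ(G,u) = [0,u] with operations x ⊕ y = u ⊓ (x + y) and ¬x = u - x is an MV-algebra. -/
/-- The unit segment of an abelian l-group with strong unit is an MV-algebra,
with `x ⊕ y = u ⊓ (x + y)` and `¬x = u - x`. -/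
theorem segment_is_MV_algebra {G : Type*} [Lattice G] [AddCommGroup G]
    [CovariantClass G G (· + ·) (· ≤ ·)] (u : G) (hu : 0 < u)
    (hsu : ∀ x : G, ∃ n : ℕ, x ≤ n • u)
    (oplus : G → G → G) (hoplus : ∀ x y, oplus x y = u ⊓ (x + y))
    (mvnot : G → G) (hnot : ∀ x, mvnot x = u - x) :
    -- closure of the segment under the operations
    (∀ x ∈ Set.Icc (0 : G) u, ∀ y ∈ Set.Icc (0 : G) u, oplus x y ∈ Set.Icc (0 : G) u) ∧
    (∀ x ∈ Set.Icc (0 : G) u, mvnot x ∈ Set.Icc (0 : G) u) ∧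
    ((0 : G) ∈ Set.Icc (0 : G) u) ∧
    -- MV-algebra axioms
    (∀ x ∈ Set.Icc (0 : G) u, ∀ y ∈ Set.Icc (0 : G) u, oplus x y = oplus y x) ∧
    (∀ x ∈ Set.Icc (0 : G) u, ∀ y ∈ Set.Icc (0 : G) u, ∀ z ∈ Set.Icc (0 : G) u,
        oplus (oplus x y) z = oplus x (oplus y z)) ∧
    (∀ x ∈ Set.Icc (0 : G) u, oplus x 0 = x) ∧
    (∀ x ∈ Set.Icc (0 : G) u, mvnot (mvnot x) = x) ∧
    (∀ x ∈ Set.Icc (0 : G) u, oplus x (mvnot 0) = mvnot 0) ∧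
    (∀ x ∈ Set.Icc (0 : G) u, ∀ y ∈ Set.Icc (0 : G) u,
        oplus (mvnot (oplus (mvnot x) y)) y = oplus (mvnot (oplus (mvnot y) x)) x) := by
  have key : ∀ x y : G, 0 ≤ x → x ≤ u → 0 ≤ y → y ≤ u →
      oplus (mvnot (oplus (mvnot x) y)) y = x ⊔ y := by
    intro x y hx0 hxu hy0 hyu
    rw [hoplus, hnot, hnot, hoplus, sub_inf, sub_self]
    have e1 : u - (u - x + y) = x - y := by abel
    rw [e1]
    rw [sup_add, zero_add, sub_add_cancel,
      inf_eq_right.mpr (sup_le hyu hxu), sup_comm]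
  refine ⟨?_, ?_, ?_, ?_, ?_, ?_, ?_, ?_, ?_⟩
  · rintro x ⟨hx0, hxu⟩ y ⟨hy0, hyu⟩
    rw [hoplus]
    exact ⟨le_inf hu.le (add_nonneg hx0 hy0), inf_le_left⟩
  · rintro x ⟨hx0, hxu⟩
    rw [hnot]
    exact ⟨sub_nonneg.mpr hxu, sub_le_self _ hx0⟩
  · exact ⟨le_rfl, hu.le⟩
  · intro x _ y _
    rw [hoplus, hoplus, add_comm]
  · rintro x ⟨hx0, _⟩ y _ z ⟨hz0, _⟩
    rw [hoplus, hoplus, hoplus, hoplus, inf_add, add_inf, ← inf_assoc, ← inf_assoc,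
      inf_eq_left.mpr (le_add_of_nonneg_right hz0),
      inf_eq_left.mpr (le_add_of_nonneg_left hx0), add_assoc]
  · rintro x ⟨_, hxu⟩
    rw [hoplus, add_zero, inf_eq_right.mpr hxu]
  · intro x _
    rw [hnot, hnot, sub_sub_cancel]
  · rintro x ⟨hx0, _⟩
    rw [hnot, sub_zero, hoplus, inf_eq_left.mpr (le_add_of_nonneg_left hx0)]
  · rintro x ⟨hx0, hxu⟩ y ⟨hy0, hyu⟩
    rw [key x y hx0 hxu hy0 hyu, key y x hy0 hyu hx0 hxu, sup_comm]
end

section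
/- Let (G,u) be an abelian l-group with strong unit, and J an l-ideal of G. For x, y ∈ [0,u], one has x - y ∈ J if and only if the MV-algebra congruence classes of x and y modulo the ideal J ∩ [0,u] coincide, i.e., the map [x]_{J ∩ [0,u]} ↦ [x]_J is a well-defined injection from Γ(G,u)/(J ∩ [0,u]) into Γ(G/J, u_J). -/
/-- For `x, y` in the unit segment of an abelian l-group with strong unit and an
l-ideal `J`, the group congruence `x - y ∈ J` holds iff the Chang distance
`d(x,y) = |x - y|` lies in `J ∩ [0,u]`; hence `[x] ↦ [x]_J` is a well-defined
injection of `Γ(G,u)/(J ∩ [0,u])` into `Γ(G/J, u_J)`. -/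
theorem sub_mem_iff_chang_distance_mem {G : Type*} [Lattice G] [AddCommGroup G]
    [CovariantClass G G (· + ·) (· ≤ ·)] (u : G) (hu : 0 < u)
    (hsu : ∀ x : G, ∃ n : ℕ, x ≤ n • u)
    (J : AddSubgroup G)
    (hJ : ∀ x y : G, x ⊔ (-x) ≤ y ⊔ (-y) → y ∈ J → x ∈ J)
    (x y : G) (hx : x ∈ Set.Icc (0 : G) u) (hy : y ∈ Set.Icc (0 : G) u) :
    x - y ∈ J ↔ ((x - y) ⊔ (y - x)) ∈ (J : Set G) ∩ Set.Icc (0 : G) u := by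
  obtain ⟨hx0, hxu⟩ := hx
  obtain ⟨hy0, hyu⟩ := hy
  set a := (x - y) ⊔ (y - x) with ha
  have ha0 : (0 : G) ≤ a := by
    simpa [abs, neg_sub] using abs_nonneg (x - y)
  have haeq : a ⊔ (-a) = a := sup_eq_left.2 (le_trans (neg_nonpos.2 ha0) ha0)
  have hxy : (x - y) ⊔ (-(x - y)) = a := by rw [neg_sub]
  constructor
  · intro h
    refine ⟨hJ a (x - y) (by rw [haeq, hxy]) h, ha0, ?_⟩
    exact sup_le (sub_le_iff_le_add.2 (le_trans hxu (le_add_of_nonneg_right hy0)))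
      (sub_le_iff_le_add.2 (le_trans hyu (le_add_of_nonneg_right hx0)))
  · rintro ⟨h, -⟩
    exact hJ (x - y) a (by rw [haeq, hxy]) h
end

section
/- Let G be an abelian l-group, u > 0, and A ⊆ [0,u] a subset closed under 0, the operation a ⊕ b = u ⊓ (a+b), and ¬a = u - a (i.e., a sub-MV-algebra of the segment). Let A* be the subgroup of G generated by A. Then A* ∩ [0,u] = A; that is, every element x of A* with 0 ≤ x ≤ u lies in A. -/
/-!
Every element of `A*` can be written as `x = s - m • u` with `s` a sum of elements of `A`
(using `-a = (u - a) - u`). If moreover `0 ≤ x ≤ u`, peel off copies of `u` one at a time: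
a sum `s ≥ u` of elements of `A` splits as `s = u ⊓ s + (s - u ⊓ s)`, and `s - u ⊓ s` is again
a sum of elements of `A`, obtained by replacing `a₀ + (a₁ + ⋯)` with `a₀ ⊙ (a₁ ⊕ ⋯)` followed
by the residue of the tail. Once no copies of `u` are left, `x = u ⊓ s = a₀ ⊕ ⋯ ⊕ aₙ ∈ A`.
-/

section

variable {G : Type*} [Lattice G] [AddCommGroup G]

lemma inf_add_inf_eq_inf_add [AddLeftMono G] {u a : G} (ha : 0 ≤ a) (s : G) :
    u ⊓ (a + u ⊓ s) = u ⊓ (a + s) := by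
  rw [add_inf, ← inf_assoc, inf_eq_left.2 (le_add_of_nonneg_left ha)]

/-- `a ⊙ b = ¬(¬a ⊕ ¬b)` in the segment `[0, u]`. -/
lemma add_sub_inf_add_eq [AddLeftMono G] (u a b : G) :
    (a + b) - u ⊓ (a + b) = u - u ⊓ ((u - a) + (u - b)) := by
  rw [sub_inf, sub_inf, sub_self, sub_self, sup_comm]
  congr 1
  abel

structure IsSubMVAlgebra (u : G) (A : Set G) : Prop where
  subset_Icc : A ⊆ Set.Icc 0 u
  zero_mem : (0 : G) ∈ A
  inf_add_mem : ∀ a ∈ A, ∀ b ∈ A, u ⊓ (a + b) ∈ A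
  sub_mem : ∀ a ∈ A, u - a ∈ A

namespace IsSubMVAlgebra

variable {u : G} {A : Set G} (hA : IsSubMVAlgebra u A)
include hA

lemma nonneg_of_mem {a : G} (ha : a ∈ A) : 0 ≤ a := (hA.subset_Icc ha).1

lemma top_mem : u ∈ A := by
  simpa using hA.sub_mem 0 hA.zero_mem

lemma top_nonneg : 0 ≤ u := (hA.subset_Icc hA.zero_mem).2

lemma exists_nsmul_sub_mem_closure {s : G} (hs : s ∈ AddSubmonoid.closure A) :
    ∃ n : ℕ, n • u - s ∈ AddSubmonoid.closure A := by
  induction hs using AddSubmonoid.closure_induction with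
  | mem a ha => exact ⟨1, by simpa using AddSubmonoid.subset_closure (hA.sub_mem a ha)⟩
  | zero => exact ⟨0, by simp⟩
  | add s t _ _ hs ht =>
    obtain ⟨m, hm⟩ := hs
    obtain ⟨n, hn⟩ := ht
    refine ⟨m + n, ?_⟩
    convert add_mem hm hn using 1
    rw [add_nsmul]
    abel

lemma nsmul_top_mem_closure (m : ℕ) : m • u ∈ AddSubmonoid.closure A :=
  nsmul_mem (AddSubmonoid.subset_closure hA.top_mem) m

lemma exists_add_nsmul_mem_closure {x : G} (hx : x ∈ AddSubgroup.closure A) :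
    ∃ m : ℕ, x + m • u ∈ AddSubmonoid.closure A := by
  induction hx using AddSubgroup.closure_induction with
  | mem a ha => exact ⟨0, by simpa using AddSubmonoid.subset_closure ha⟩
  | zero => exact ⟨0, by simp⟩
  | add x y _ _ hx hy =>
    obtain ⟨m, hm⟩ := hx
    obtain ⟨n, hn⟩ := hy
    refine ⟨m + n, ?_⟩
    convert add_mem hm hn using 1
    rw [add_nsmul]
    abel
  | neg x _ hx =>
    obtain ⟨m, hm⟩ := hx
    obtain ⟨n, hn⟩ := hA.exists_nsmul_sub_mem_closure hm
    -- `-x + n • u = m • u + (n • u - (x + m • u))`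
    refine ⟨n, ?_⟩
    convert add_mem (hA.nsmul_top_mem_closure m) hn using 1
    abel

variable [AddLeftMono G]

lemma add_sub_inf_add_mem {a b : G} (ha : a ∈ A) (hb : b ∈ A) :
    (a + b) - u ⊓ (a + b) ∈ A := by
  rw [add_sub_inf_add_eq]
  exact hA.sub_mem _ (hA.inf_add_mem _ (hA.sub_mem a ha) _ (hA.sub_mem b hb))

lemma inf_mem_of_mem_closure {s : G} (hs : s ∈ AddSubmonoid.closure A) : u ⊓ s ∈ A := by
  induction hs using AddSubmonoid.closure_induction_left with
  | zero => simpa [inf_eq_right.2 hA.top_nonneg] using hA.zero_mem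
  | add_left a ha s _ ih =>
    rw [← inf_add_inf_eq_inf_add (hA.nonneg_of_mem ha)]
    exact hA.inf_add_mem a ha _ ih

lemma sub_inf_mem_closure {s : G} (hs : s ∈ AddSubmonoid.closure A) :
    s - u ⊓ s ∈ AddSubmonoid.closure A := by
  induction hs using AddSubmonoid.closure_induction_left with
  | zero => simp [inf_eq_right.2 hA.top_nonneg]
  | add_left a ha s hs ih =>
    have hsplit : a + s - u ⊓ (a + s) = ((a + u ⊓ s) - u ⊓ (a + u ⊓ s)) + (s - u ⊓ s) := by
      rw [inf_add_inf_eq_inf_add (hA.nonneg_of_mem ha)]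
      abel
    rw [hsplit]
    exact add_mem (AddSubmonoid.subset_closure
      (hA.add_sub_inf_add_mem ha (hA.inf_mem_of_mem_closure hs))) ih

lemma mem_of_add_nsmul_mem_closure {x : G} (hx₀ : 0 ≤ x) (hxu : x ≤ u) :
    ∀ m : ℕ, x + m • u ∈ AddSubmonoid.closure A → x ∈ A
  | 0, hs => by
    simpa [inf_eq_right.2 hxu] using hA.inf_mem_of_mem_closure hs
  | m + 1, hs => by
    have hu : u ≤ x + (m + 1) • u := by
      rw [succ_nsmul, ← add_assoc]
      exact le_add_of_nonneg_left (add_nonneg hx₀ (nsmul_nonneg hA.top_nonneg m))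
    have := hA.sub_inf_mem_closure hs
    rw [inf_eq_left.2 hu, succ_nsmul, ← add_assoc, add_sub_cancel_right] at this
    exact mem_of_add_nsmul_mem_closure hx₀ hxu m this

theorem closure_inter_Icc_eq : (AddSubgroup.closure A : Set G) ∩ Set.Icc 0 u = A := by
  refine Set.Subset.antisymm ?_ fun a ha => ⟨AddSubgroup.subset_closure ha, hA.subset_Icc ha⟩
  rintro x ⟨hx, hx₀, hxu⟩
  obtain ⟨m, hm⟩ := hA.exists_add_nsmul_mem_closure hx
  exact hA.mem_of_add_nsmul_mem_closure hx₀ hxu m hm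

end IsSubMVAlgebra

end

theorem subMV_closure_inter_segment_general {G : Type*} [Lattice G] [AddCommGroup G]
    [CovariantClass G G (· + ·) (· ≤ ·)] (u : G)
    (A : Set G) (hA : A ⊆ Set.Icc (0 : G) u)
    (h0 : (0 : G) ∈ A)
    (hoplus : ∀ a ∈ A, ∀ b ∈ A, u ⊓ (a + b) ∈ A)
    (hneg : ∀ a ∈ A, u - a ∈ A) :
    (AddSubgroup.closure A : Set G) ∩ Set.Icc (0 : G) u = A :=
  IsSubMVAlgebra.closure_inter_Icc_eq ⟨hA, h0, hoplus, hneg⟩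

/-- If `A` is a sub-MV-algebra of the segment `[0,u]` of an abelian l-group `G`
and `A*` is the subgroup generated by `A`, then `A* ∩ [0,u] = A`. -/
theorem subMV_closure_inter_segment {G : Type*} [Lattice G] [AddCommGroup G]
    [CovariantClass G G (· + ·) (· ≤ ·)] (u : G) (hu : 0 < u)
    (A : Set G) (hA : A ⊆ Set.Icc (0 : G) u)
    (h0 : (0 : G) ∈ A) (h1 : u ∈ A)
    (hoplus : ∀ a ∈ A, ∀ b ∈ A, u ⊓ (a + b) ∈ A)
    (hneg : ∀ a ∈ A, u - a ∈ A) :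
    (AddSubgroup.closure A : Set G) ∩ Set.Icc (0 : G) u = A :=
  subMV_closure_inter_segment_general u A hA h0 hoplus hneg
end

section
/- Let A be a totally ordered MV-algebra (MV-chain). Define A* = ℤ × A with lexicographic order and with the identification (m+1,0) = (m,1), addition given by (m,a) + (n,b) = (m+n, a ⊕ b) if a ⊕ b < 1 and (m+n+1, a ⊙ b) if a ⊕ b = 1, and negation -(m,a) = (-m-1, ¬a). Then A* is a totally ordered abelian group. -/
/-- An MV-algebra. -/
class MVAlgebra (A : Type*) where
  oplus : A → A → A
  mvnot : A → A
  zero : A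
  oplus_comm : ∀ a b, oplus a b = oplus b a
  oplus_assoc : ∀ a b c, oplus (oplus a b) c = oplus a (oplus b c)
  zero_oplus : ∀ a, oplus zero a = a
  mvnot_mvnot : ∀ a, mvnot (mvnot a) = a
  oplus_one : ∀ a, oplus a (mvnot zero) = mvnot zero
  luk : ∀ a b, oplus (mvnot (oplus (mvnot a) b)) b = oplus (mvnot (oplus (mvnot b) a)) a

namespace MVAlgebra

variable {A : Type*} [MVAlgebra A]

/-- The top element `1 = ¬0`. -/
def one : A := mvnot zero

/-- `a ⊙ b = ¬(¬a ⊕ ¬b)`. -/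
def odot (a b : A) : A := mvnot (oplus (mvnot a) (mvnot b))

/-- The natural MV-order: `a ≤ b` iff `¬a ⊕ b = 1`. -/
def mvle (a b : A) : Prop := oplus (mvnot a) b = one

end MVAlgebra

namespace Chang

open MVAlgebra

variable (A : Type*) [MVAlgebra A]

/-- The carrier of Chang's group: pairs `(m, a)` with `a ≠ 1`
(the pair `(m, 1)` being identified with `(m+1, 0)`). -/
def S : Set (ℤ × A) := {p | p.2 ≠ one}

variable {A}
open Classical

/-- Normalization realizing the identification `(m, 1) = (m+1, 0)`. -/
noncomputable def norm (p : ℤ × A) : ℤ × A := if p.2 = one then (p.1 + 1, zero) else p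

/-- Chang's addition: `(m,a) + (n,b) = (m+n, a ⊕ b)` if `a ⊕ b < 1`,
and `(m+n+1, a ⊙ b)` if `a ⊕ b = 1`. -/
noncomputable def add (p q : ℤ × A) : ℤ × A :=
  if oplus p.2 q.2 = one then (p.1 + q.1 + 1, odot p.2 q.2)
  else (p.1 + q.1, oplus p.2 q.2)

/-- Chang's negation: `-(m,a) = (-m-1, ¬a)` (normalized). -/
noncomputable def neg (p : ℤ × A) : ℤ × A := norm (-p.1 - 1, mvnot p.2)

/-- The zero element `(0, 0)`. -/
def zeroEl : ℤ × A := ((0 : ℤ), zero)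

/-- The lexicographic order on pairs. -/
def lexLe (p q : ℤ × A) : Prop := p.1 < q.1 ∨ (p.1 = q.1 ∧ mvle p.2 q.2)

end Chang

namespace CP
open MVAlgebra
variable {A : Type*} [MVAlgebra A]

lemma oplus_top (a : A) : oplus a one = one := oplus_one a
lemma one_oplus (a : A) : oplus one a = one := by rw [oplus_comm]; exact oplus_one a
lemma mvnot_one : mvnot (one : A) = zero := mvnot_mvnot zero
lemma oplus_zero (a : A) : oplus a zero = a := by rw [oplus_comm]; exact zero_oplus a
lemma mvnot_inj {a b : A} (h : mvnot a = mvnot b) : a = b := by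
  rw [← mvnot_mvnot a, h, mvnot_mvnot]
lemma mvnot_oplus_self (a : A) : oplus (mvnot a) a = one := by
  have h := luk a (one : A)
  simp only [oplus_top, mvnot_one, zero_oplus] at h
  exact h.symm
lemma oplus_mvnot_self (a : A) : oplus a (mvnot a) = one := by
  rw [oplus_comm]; exact mvnot_oplus_self a
lemma mvle_refl (a : A) : mvle a a := mvnot_oplus_self a
lemma mvle_one (a : A) : mvle a one := oplus_top (mvnot a)
lemma zero_mvle (a : A) : mvle zero a := one_oplus a
lemma mvle_antisymm {a b : A} (h1 : mvle a b) (h2 : mvle b a) : a = b := by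
  have h1' : oplus (mvnot a) b = one := h1
  have h2' : oplus (mvnot b) a = one := h2
  have h := luk b a
  rw [h2', h1', mvnot_one, zero_oplus, zero_oplus] at h
  exact h
lemma mvle_iff_exists {a b : A} : mvle a b ↔ ∃ c, b = oplus a c := by
  constructor
  · intro h
    have h1 : oplus (mvnot a) b = one := h
    have h2 := luk a b
    rw [h1, mvnot_one, zero_oplus] at h2
    exact ⟨mvnot (oplus (mvnot b) a), by rw [oplus_comm]; exact h2⟩
  · rintro ⟨c, rfl⟩
    show oplus (mvnot a) (oplus a c) = one
    rw [← oplus_assoc, mvnot_oplus_self, one_oplus]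
lemma mvle_trans {a b c : A} (h1 : mvle a b) (h2 : mvle b c) : mvle a c := by
  obtain ⟨u, rfl⟩ := mvle_iff_exists.mp h1
  obtain ⟨v, rfl⟩ := mvle_iff_exists.mp h2
  exact mvle_iff_exists.mpr ⟨oplus u v, by rw [oplus_assoc]⟩
lemma mvle_oplus_right (a c : A) : mvle a (oplus a c) := mvle_iff_exists.mpr ⟨c, rfl⟩
lemma oplus_mono_right (a : A) {b c : A} (h : mvle b c) : mvle (oplus a b) (oplus a c) := by
  obtain ⟨d, rfl⟩ := mvle_iff_exists.mp h
  exact mvle_iff_exists.mpr ⟨d, by rw [oplus_assoc]⟩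
lemma eq_one_of_one_mvle {a : A} (h : mvle one a) : a = one := mvle_antisymm (mvle_one a) h
lemma mvle_mvnot {a b : A} (h : mvle a b) : mvle (mvnot b) (mvnot a) := by
  show oplus (mvnot (mvnot b)) (mvnot a) = one
  rw [mvnot_mvnot, oplus_comm]
  exact h
lemma odot_comm (a b : A) : odot a b = odot b a := by unfold odot; rw [oplus_comm]
lemma mvnot_odot (a b : A) : mvnot (odot a b) = oplus (mvnot a) (mvnot b) := by
  unfold odot; rw [mvnot_mvnot]
lemma mvnot_oplus (a b : A) : mvnot (oplus a b) = odot (mvnot a) (mvnot b) := by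
  unfold odot; rw [mvnot_mvnot, mvnot_mvnot]
lemma odot_assoc (a b c : A) : odot (odot a b) c = odot a (odot b c) := by
  unfold odot; rw [mvnot_mvnot, mvnot_mvnot, oplus_assoc]
lemma odot_le_left (a b : A) : mvle (odot a b) a := by
  show oplus (mvnot (odot a b)) a = one
  rw [mvnot_odot, oplus_comm, ← oplus_assoc, oplus_mvnot_self, one_oplus]
lemma odot_le_right (a b : A) : mvle (odot a b) b := by
  rw [odot_comm]; exact odot_le_left b a
lemma odot_mono_right (c : A) {a b : A} (h : mvle a b) : mvle (odot c a) (odot c b) :=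
  mvle_mvnot (oplus_mono_right (mvnot c) (mvle_mvnot h))
lemma oplus_eq_zero_left {a b : A} (h : oplus a b = zero) : a = zero :=
  mvle_antisymm (h ▸ mvle_oplus_right a b) (zero_mvle a)
lemma odot_eq_one {a b : A} (h : odot a b = one) : a = one := by
  have h1 : oplus (mvnot a) (mvnot b) = zero := by
    have h2 := congrArg mvnot h
    rwa [mvnot_odot, mvnot_one] at h2
  have h2 := oplus_eq_zero_left h1
  exact mvnot_inj (h2.trans mvnot_one.symm)
lemma odot_mvnot_self (a : A) : odot (mvnot a) a = zero := by
  unfold odot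
  rw [mvnot_mvnot, oplus_mvnot_self, mvnot_one]

def msub (a b : A) : A := odot a (mvnot b)
lemma msub_def (a b : A) : msub a b = mvnot (oplus (mvnot a) b) := by
  unfold msub odot; rw [mvnot_mvnot]
lemma msub_eq_zero {a b : A} (h : mvle a b) : msub a b = zero := by
  have h' : oplus (mvnot a) b = one := h
  rw [msub_def, h', mvnot_one]
lemma luk_msub (a b : A) : oplus (msub a b) b = oplus (msub b a) a := by
  rw [msub_def, msub_def]; exact luk a b
lemma oplus_msub {a b : A} (h : mvle a b) : oplus a (msub b a) = b := by
  rw [oplus_comm, luk_msub, msub_eq_zero h, zero_oplus]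
lemma decomp {a b : A} (h : oplus a b = one) : oplus (mvnot a) (odot a b) = b := by
  have hle : mvle (mvnot a) b := by
    show oplus (mvnot (mvnot a)) b = one; rwa [mvnot_mvnot]
  have h2 : msub b (mvnot a) = odot a b := by
    unfold msub; rw [mvnot_mvnot, odot_comm]
  have h3 := oplus_msub hle
  rwa [h2] at h3


section Chain

lemma odot_eq_zero (hch : ∀ a b : A, mvle a b ∨ mvle b a) {a b : A}
    (h : oplus a b ≠ one) : odot a b = zero := by
  rcases hch a (mvnot b) with h1 | h1
  · have h1' : oplus (mvnot a) (mvnot b) = one := h1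
    unfold odot; rw [h1', mvnot_one]
  · exfalso
    apply h
    have h1' : oplus (mvnot (mvnot b)) a = one := h1
    rwa [mvnot_mvnot, oplus_comm] at h1'

lemma mvle_mvnot_of_oplus_eq (hch : ∀ a b : A, mvle a b ∨ mvle b a) {w d : A} (hw : w ≠ one) (h : oplus w d = w) :
    mvle d (mvnot w) := by
  rcases hch d (mvnot w) with h1 | h1
  · exact h1
  · exfalso
    apply hw
    have h1' : oplus (mvnot (mvnot w)) d = one := h1
    rw [mvnot_mvnot] at h1'
    exact h.symm.trans h1'

lemma canc0 (hch : ∀ a b : A, mvle a b ∨ mvle b a) {w d : A} (hw : w ≠ one) (h : oplus w d = w) : d = zero := by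
  by_cases h0 : w = zero
  · subst h0; rw [← zero_oplus d]; exact h
  · have hd1 := mvle_mvnot_of_oplus_eq hch hw h
    have hm : msub (mvnot w) d = mvnot w := by
      rw [msub_def, mvnot_mvnot, h]
    have e1 : oplus (mvnot w) d = mvnot w := by
      have h3 := oplus_msub hd1
      rw [hm] at h3
      rwa [oplus_comm]
    have hw0 : mvnot w ≠ one := fun hh => h0 (by rw [← mvnot_mvnot w, hh]; exact mvnot_one)
    have hd2 : mvle d w := by
      have h4 := mvle_mvnot_of_oplus_eq hch hw0 e1
      rwa [mvnot_mvnot] at h4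
    have hd3 := mvle_mvnot hd2
    have hm2 : msub (mvnot d) (mvnot w) = w := by
      rw [msub_def, mvnot_mvnot, oplus_comm, e1, mvnot_mvnot]
    have h5 := oplus_msub hd3
    rw [hm2, mvnot_oplus_self] at h5
    rw [← mvnot_mvnot d, ← h5]
    exact mvnot_one

lemma cancel (hch : ∀ a b : A, mvle a b ∨ mvle b a) {x y z : A} (hne : oplus x y ≠ one) (h : oplus x y = oplus x z) : y = z := by
  rcases hch y z with hle | hle
  · obtain ⟨d, rfl⟩ := mvle_iff_exists.mp hle
    have h2 : oplus (oplus x y) d = oplus x y := by rw [oplus_assoc, ← h]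
    rw [canc0 hch hne h2, oplus_zero]
  · obtain ⟨d, rfl⟩ := mvle_iff_exists.mp hle
    have hne' : oplus x z ≠ one := fun hh => hne (h.trans hh)
    have h2 : oplus (oplus x z) d = oplus x z := by rw [oplus_assoc]; exact h
    rw [canc0 hch hne' h2, oplus_zero]

lemma key (hch : ∀ a b : A, mvle a b ∨ mvle b a) {a b c : A} (hab : oplus a b = one) (hbc : oplus b c = one) (hb : b ≠ one) :
    oplus (odot a b) c = oplus a (odot b c) := by
  have hdab : oplus (mvnot a) (odot a b) = b := decomp hab
  have hdcb : oplus (mvnot c) (odot b c) = b := by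
    have h := decomp (show oplus c b = one by rwa [oplus_comm])
    rwa [odot_comm c b] at h
  by_cases hR : oplus a (odot b c) = one
  · rw [hR]
    have hq : mvle (mvnot a) (odot b c) := by
      show oplus (mvnot (mvnot a)) (odot b c) = one
      rwa [mvnot_mvnot]
    have hs := oplus_msub hq
    have e1 : oplus (mvnot a) (oplus (mvnot c) (msub (odot b c) (mvnot a))) = b := by
      have h2 : oplus (mvnot c) (oplus (mvnot a) (msub (odot b c) (mvnot a))) = b := by
        rw [hs]; exact hdcb
      calc oplus (mvnot a) (oplus (mvnot c) (msub (odot b c) (mvnot a)))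
          = oplus (oplus (mvnot a) (mvnot c)) (msub (odot b c) (mvnot a)) :=
            (oplus_assoc _ _ _).symm
        _ = oplus (oplus (mvnot c) (mvnot a)) (msub (odot b c) (mvnot a)) := by
            rw [oplus_comm (mvnot a) (mvnot c)]
        _ = oplus (mvnot c) (oplus (mvnot a) (msub (odot b c) (mvnot a))) :=
            oplus_assoc _ _ _
        _ = b := h2
    have e3 : oplus (mvnot c) (msub (odot b c) (mvnot a)) = odot a b :=
      cancel hch (by rw [e1]; exact hb) (e1.trans hdab.symm)
    rw [← e3, oplus_assoc, oplus_comm (msub (odot b c) (mvnot a)) c, ← oplus_assoc,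
      mvnot_oplus_self, one_oplus]
  · have hq : mvle (odot b c) (mvnot a) := by
      rcases hch (odot b c) (mvnot a) with h1 | h1
      · exact h1
      · exfalso; apply hR
        have h1' : oplus (mvnot (mvnot a)) (odot b c) = one := h1
        rwa [mvnot_mvnot] at h1'
    have hu := oplus_msub hq
    have e1 : oplus (odot b c) (oplus (msub (mvnot a) (odot b c)) (odot a b)) = b := by
      rw [← oplus_assoc, hu]; exact hdab
    have e2 : oplus (odot b c) (mvnot c) = b := by rw [oplus_comm]; exact hdcb
    have e3 : oplus (msub (mvnot a) (odot b c)) (odot a b) = mvnot c :=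
      cancel hch (by rw [e1]; exact hb) (e1.trans e2.symm)
    have hu2 : msub (mvnot a) (odot b c) = mvnot (oplus a (odot b c)) := by
      rw [msub_def, mvnot_mvnot]
    have e5 : c = msub (oplus a (odot b c)) (odot a b) := by
      rw [msub_def, ← hu2, e3, mvnot_mvnot]
    have hpR : mvle (odot a b) (oplus a (odot b c)) :=
      mvle_trans (odot_le_left a b) (mvle_oplus_right a (odot b c))
    calc oplus (odot a b) c
        = oplus (odot a b) (msub (oplus a (odot b c)) (odot a b)) := by rw [← e5]
      _ = oplus a (odot b c) := oplus_msub hpR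

lemma key2 (hch : ∀ a b : A, mvle a b ∨ mvle b a) {a b c : A} (hab : oplus a b = one) (hbc : oplus b c ≠ one) :
    oplus (odot a b) c = odot a (oplus b c) := by
  have hle0 : mvle (mvnot a) b := by
    show oplus (mvnot (mvnot a)) b = one; rwa [mvnot_mvnot]
  have hle : mvle (mvnot a) (oplus b c) := mvle_trans hle0 (mvle_oplus_right b c)
  have h1 := oplus_msub hle
  have h2 : msub (oplus b c) (mvnot a) = odot a (oplus b c) := by
    unfold msub; rw [mvnot_mvnot, odot_comm]
  rw [h2] at h1
  have h3 : oplus (mvnot a) (oplus (odot a b) c) = oplus b c := by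
    rw [← oplus_assoc, decomp hab]
  exact cancel hch (by rw [h3]; exact hbc) (h3.trans h1.symm)

lemma key2' (hch : ∀ a b : A, mvle a b ∨ mvle b a) {a b c : A} (hab : oplus a b ≠ one) (hbc : oplus b c = one) :
    odot (oplus a b) c = oplus a (odot b c) := by
  have h := key2 hch (show oplus c b = one by rwa [oplus_comm])
    (show oplus b a ≠ one by rwa [oplus_comm])
  calc odot (oplus a b) c = odot c (oplus b a) := by rw [odot_comm, oplus_comm]
    _ = oplus (odot c b) a := h.symm
    _ = oplus a (odot b c) := by rw [odot_comm c b, oplus_comm]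

lemma key3 (hch : ∀ a b : A, mvle a b ∨ mvle b a) {a b c : A} (hab : oplus a b ≠ one) (hbc : oplus b c ≠ one) (hb0 : b ≠ zero) :
    odot (oplus a b) c = odot a (oplus b c) := by
  have h1 : oplus (mvnot a) (mvnot b) = one := by
    have h := congrArg mvnot (odot_eq_zero hch hab)
    rwa [mvnot_odot] at h
  have h2 : oplus (mvnot b) (mvnot c) = one := by
    have h := congrArg mvnot (odot_eq_zero hch hbc)
    rwa [mvnot_odot] at h
  have hb1 : mvnot b ≠ one := fun hh => hb0 (by rw [← mvnot_mvnot b, hh]; exact mvnot_one)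
  have h := congrArg mvnot (key hch h1 h2 hb1)
  simp only [mvnot_oplus, mvnot_odot, mvnot_mvnot] at h
  exact h

end Chain
end CP


namespace CP
open MVAlgebra
variable {A : Type*} [MVAlgebra A]

lemma add_mk_one {m n : ℤ} {a b : A} (h : oplus a b = one) :
    Chang.add (m, a) (n, b) = (m + n + 1, odot a b) := by
  simp [Chang.add, h]

lemma add_mk_lt {m n : ℤ} {a b : A} (h : oplus a b ≠ one) :
    Chang.add (m, a) (n, b) = (m + n, oplus a b) := by
  simp [Chang.add, h]

lemma norm_mk_one (m : ℤ) : Chang.norm (m, (one : A)) = (m + 1, zero) := by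
  simp [Chang.norm]

lemma norm_mk_ne (m : ℤ) {a : A} (h : a ≠ one) : Chang.norm (m, a) = (m, a) := by
  simp [Chang.norm, h]

end CP

open MVAlgebra Chang in
/-- Chang's construction on an MV-chain is a totally ordered abelian group. -/
theorem chang_group_is_totally_ordered_abelian_group
    (A : Type*) [MVAlgebra A]
    (hchain : ∀ a b : A, mvle a b ∨ mvle b a)
    (h01 : (zero : A) ≠ one) :
    -- closure under the operations
    (∀ p ∈ S A, ∀ q ∈ S A, add p q ∈ S A) ∧
    (∀ p ∈ S A, neg p ∈ S A) ∧
    (zeroEl (A := A) ∈ S A) ∧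
    -- abelian group axioms
    (∀ p ∈ S A, ∀ q ∈ S A, ∀ r ∈ S A, add (add p q) r = add p (add q r)) ∧
    (∀ p ∈ S A, ∀ q ∈ S A, add p q = add q p) ∧
    (∀ p ∈ S A, add zeroEl p = p) ∧
    (∀ p ∈ S A, add (neg p) p = zeroEl) ∧
    -- total order axioms
    (∀ p ∈ S A, lexLe p p) ∧
    (∀ p ∈ S A, ∀ q ∈ S A, lexLe p q → lexLe q p → p = q) ∧
    (∀ p ∈ S A, ∀ q ∈ S A, ∀ r ∈ S A, lexLe p q → lexLe q r → lexLe p r) ∧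
    (∀ p ∈ S A, ∀ q ∈ S A, lexLe p q ∨ lexLe q p) ∧
    -- compatibility of the order with addition
    (∀ p ∈ S A, ∀ q ∈ S A, ∀ r ∈ S A, lexLe p q → lexLe (add r p) (add r q)) := by
  refine ⟨?_, ?_, ?_, ?_, ?_, ?_, ?_, ?_, ?_, ?_, ?_, ?_⟩
  · -- closure of add
    rintro ⟨m, a⟩ ha ⟨n, b⟩ hb
    replace ha : a ≠ one := ha
    by_cases h : oplus a b = one
    · rw [CP.add_mk_one h]
      exact fun hh => ha (CP.odot_eq_one hh)
    · rw [CP.add_mk_lt h]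
      exact h
  · -- closure of neg
    rintro ⟨m, a⟩ ha
    by_cases h : a = zero
    · subst h
      have e : Chang.neg ((m : ℤ), (zero : A)) = (-m - 1 + 1, zero) := CP.norm_mk_one _
      rw [e]
      exact h01
    · have hna : mvnot a ≠ one :=
        fun hh => h (by rw [← mvnot_mvnot a, hh]; exact CP.mvnot_one)
      have e : Chang.neg (m, a) = (-m - 1, mvnot a) := CP.norm_mk_ne _ hna
      rw [e]
      exact hna
  · exact h01
  · -- associativity
    rintro ⟨m, a⟩ ha ⟨n, b⟩ hb ⟨k, c⟩ hc
    replace ha : a ≠ one := ha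
    replace hb : b ≠ one := hb
    replace hc : c ≠ one := hc
    by_cases hab : oplus a b = one <;> by_cases hbc : oplus b c = one
    · have hE := CP.key hchain hab hbc hb
      rw [CP.add_mk_one hab, CP.add_mk_one hbc]
      by_cases h1 : oplus (odot a b) c = one
      · rw [CP.add_mk_one h1, CP.add_mk_one (hE.symm.trans h1), Prod.mk.injEq]
        exact ⟨by ring, CP.odot_assoc a b c⟩
      · rw [CP.add_mk_lt h1, CP.add_mk_lt (fun hh => h1 (hE.trans hh)), Prod.mk.injEq]
        exact ⟨by ring, hE⟩
    · have hE := CP.key2 hchain hab hbc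
      have h1 : oplus (odot a b) c ≠ one := fun hh =>
        ha (CP.eq_one_of_one_mvle ((hE.symm.trans hh) ▸ CP.odot_le_left a (oplus b c)))
      have hT : oplus a (oplus b c) = one := by
        rw [← oplus_assoc, hab]; exact CP.one_oplus c
      rw [CP.add_mk_one hab, CP.add_mk_lt h1, CP.add_mk_lt hbc, CP.add_mk_one hT,
        Prod.mk.injEq]
      exact ⟨by ring, hE⟩
    · have hE := CP.key2' hchain hab hbc
      have hT : oplus (oplus a b) c = one := by
        rw [oplus_assoc, hbc]; exact CP.oplus_top a
      have h1 : oplus a (odot b c) ≠ one := fun hh =>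
        hc (CP.eq_one_of_one_mvle ((hE.trans hh) ▸ CP.odot_le_right (oplus a b) c))
      rw [CP.add_mk_lt hab, CP.add_mk_one hT, CP.add_mk_one hbc, CP.add_mk_lt h1,
        Prod.mk.injEq]
      exact ⟨by ring, hE⟩
    · rw [CP.add_mk_lt hab, CP.add_mk_lt hbc]
      by_cases hT : oplus (oplus a b) c = one
      · have hT' : oplus a (oplus b c) = one := by rwa [← oplus_assoc]
        rw [CP.add_mk_one hT, CP.add_mk_one hT', Prod.mk.injEq]
        refine ⟨by ring, ?_⟩
        by_cases hb0 : b = zero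
        · subst hb0; rw [CP.oplus_zero, zero_oplus]
        · exact CP.key3 hchain hab hbc hb0
      · have hT' : oplus a (oplus b c) ≠ one := by rwa [← oplus_assoc]
        rw [CP.add_mk_lt hT, CP.add_mk_lt hT', Prod.mk.injEq]
        exact ⟨by ring, oplus_assoc a b c⟩
  · -- commutativity
    rintro ⟨m, a⟩ _ ⟨n, b⟩ _
    by_cases h : oplus a b = one
    · rw [CP.add_mk_one h, CP.add_mk_one (show oplus b a = one by rwa [oplus_comm]),
        Prod.mk.injEq]
      exact ⟨by ring, CP.odot_comm a b⟩
    · rw [CP.add_mk_lt h, CP.add_mk_lt (show oplus b a ≠ one by rwa [oplus_comm]),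
        Prod.mk.injEq]
      exact ⟨by ring, oplus_comm a b⟩
  · -- zero + p = p
    rintro ⟨m, a⟩ ha
    replace ha : a ≠ one := ha
    have hne : oplus (zero : A) a ≠ one := by rwa [zero_oplus]
    show Chang.add ((0 : ℤ), (zero : A)) (m, a) = (m, a)
    rw [CP.add_mk_lt hne, Prod.mk.injEq]
    exact ⟨by ring, zero_oplus a⟩
  · -- neg p + p = 0
    rintro ⟨m, a⟩ ha
    by_cases h : a = zero
    · subst h
      have e : Chang.neg ((m : ℤ), (zero : A)) = (-m - 1 + 1, zero) := CP.norm_mk_one _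
      rw [e]
      have hne : oplus (zero : A) (zero : A) ≠ one := by rwa [zero_oplus]
      rw [CP.add_mk_lt hne]
      show ((-m - 1 + 1 + m : ℤ), oplus (zero : A) zero) = ((0 : ℤ), zero)
      rw [Prod.mk.injEq]
      exact ⟨by ring, zero_oplus zero⟩
    · have hna : mvnot a ≠ one :=
        fun hh => h (by rw [← mvnot_mvnot a, hh]; exact CP.mvnot_one)
      have e : Chang.neg (m, a) = (-m - 1, mvnot a) := CP.norm_mk_ne _ hna
      rw [e, CP.add_mk_one (CP.mvnot_oplus_self a)]
      show ((-m - 1 + m + 1 : ℤ), odot (mvnot a) a) = ((0 : ℤ), zero)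
      rw [Prod.mk.injEq]
      exact ⟨by ring, CP.odot_mvnot_self a⟩
  · -- refl
    rintro ⟨m, a⟩ _
    exact Or.inr ⟨rfl, CP.mvle_refl a⟩
  · -- antisymm
    rintro ⟨m, a⟩ _ ⟨n, b⟩ _ h1 h2
    have h1' : m < n ∨ (m = n ∧ mvle a b) := h1
    have h2' : n < m ∨ (n = m ∧ mvle b a) := h2
    rcases h1' with h1' | ⟨e1, l1⟩ <;> rcases h2' with h2' | ⟨e2, l2⟩
    · exfalso; omega
    · exfalso; omega
    · exfalso; omega
    · rw [Prod.mk.injEq]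
      exact ⟨e1, CP.mvle_antisymm l1 l2⟩
  · -- trans
    rintro ⟨m, a⟩ _ ⟨n, b⟩ _ ⟨k, c⟩ _ h1 h2
    have h1' : m < n ∨ (m = n ∧ mvle a b) := h1
    have h2' : n < k ∨ (n = k ∧ mvle b c) := h2
    rcases h1' with h1' | ⟨e1, l1⟩ <;> rcases h2' with h2' | ⟨e2, l2⟩
    · exact Or.inl (show m < k by omega)
    · exact Or.inl (show m < k by omega)
    · exact Or.inl (show m < k by omega)
    · exact Or.inr ⟨show m = k by omega, CP.mvle_trans l1 l2⟩
  · -- total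
    rintro ⟨m, a⟩ _ ⟨n, b⟩ _
    rcases Int.lt_trichotomy m n with h | h | h
    · exact Or.inl (Or.inl h)
    · rcases hchain a b with hl | hl
      · exact Or.inl (Or.inr ⟨h, hl⟩)
      · exact Or.inr (Or.inr ⟨h.symm, hl⟩)
    · exact Or.inr (Or.inl h)
  · -- compat
    rintro ⟨m, a⟩ _ ⟨n, b⟩ _ ⟨k, c⟩ _ hpq
    have hpq' : m < n ∨ (m = n ∧ mvle a b) := hpq
    by_cases h1 : oplus c a = one <;> by_cases h2 : oplus c b = one
    · rw [CP.add_mk_one h1, CP.add_mk_one h2]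
      rcases hpq' with h | ⟨rfl, h⟩
      · exact Or.inl (show k + m + 1 < k + n + 1 by omega)
      · exact Or.inr ⟨rfl, CP.odot_mono_right c h⟩
    · rw [CP.add_mk_one h1, CP.add_mk_lt h2]
      rcases hpq' with h | ⟨rfl, h⟩
      · rcases lt_or_eq_of_le (show k + m + 1 ≤ k + n by omega) with h' | h'
        · exact Or.inl h'
        · exact Or.inr ⟨h', CP.mvle_trans (CP.odot_le_left c a) (CP.mvle_oplus_right c b)⟩
      · exfalso
        apply h2
        have h3 := CP.oplus_mono_right c h
        rw [h1] at h3
        exact CP.eq_one_of_one_mvle h3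
    · rw [CP.add_mk_lt h1, CP.add_mk_one h2]
      rcases hpq' with h | ⟨rfl, h⟩
      · exact Or.inl (show k + m < k + n + 1 by omega)
      · exact Or.inl (show k + m < k + m + 1 by omega)
    · rw [CP.add_mk_lt h1, CP.add_mk_lt h2]
      rcases hpq' with h | ⟨rfl, h⟩
      · exact Or.inl (show k + m < k + n by omega)
      · exact Or.inr ⟨rfl, CP.oplus_mono_right c h⟩
end

section
/- Let A be an MV-chain and A* Chang's totally ordered abelian group on ℤ × A. Then u = (0,1) = (1,0) is a strong unit of A*: for every (m,a) ∈ A* there exists n ∈ ℕ with (m,a) ≤ n • u. -/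
namespace Chang

variable {A : Type*} [MVAlgebra A]

/-- Iterated Chang addition: `n • p`. -/
noncomputable def nsmul : ℕ → ℤ × A → ℤ × A
  | 0, _ => zeroEl
  | n + 1, p => add (nsmul n p) p

/-- The strong unit `u = (0,1) = (1,0)` of Chang's group. -/
def unit : ℤ × A := ((1 : ℤ), MVAlgebra.zero)

end Chang

namespace Chang

open MVAlgebra

variable {A : Type*} [MVAlgebra A]

theorem add_of_oplus_ne_one {p q : ℤ × A} (h : oplus p.2 q.2 ≠ one) :
    add p q = (p.1 + q.1, oplus p.2 q.2) :=
  if_neg h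

theorem nsmul_unit (h01 : (zero : A) ≠ one) (n : ℕ) :
    nsmul n (unit (A := A)) = ((n : ℤ), zero) := by
  induction n with
  | zero => rfl
  | succ n ih =>
    have hsum : oplus (zero : A) zero = zero := zero_oplus zero
    rw [nsmul, ih, add_of_oplus_ne_one (hsum.trans_ne h01)]
    simp [unit, hsum]

theorem lexLe_of_fst_lt {p q : ℤ × A} (h : p.1 < q.1) : lexLe p q :=
  Or.inl h

end Chang

open MVAlgebra Chang in
theorem chang_unit_is_strong_unit_general (A : Type*) [MVAlgebra A]
    (h01 : (zero : A) ≠ one) :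
    ∀ p ∈ S A, ∃ n : ℕ, lexLe p (nsmul n (unit (A := A))) := by
  intro p _
  refine ⟨p.1.toNat + 1, lexLe_of_fst_lt ?_⟩
  rw [nsmul_unit h01]
  push_cast
  omega

open MVAlgebra Chang in
/-- `u = (0,1) = (1,0)` is a strong unit of Chang's group `A*`. -/
theorem chang_unit_is_strong_unit (A : Type*) [MVAlgebra A]
    (hchain : ∀ a b : A, mvle a b ∨ mvle b a)
    (h01 : (zero : A) ≠ one) :
    ∀ p ∈ S A, ∃ n : ℕ, lexLe p (nsmul n (unit (A := A))) :=
  chang_unit_is_strong_unit_general A h01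
end

section
/- Let A be an MV-chain. The map ι : A → Γ(A*, u), ι(a) = (0,a), is an isomorphism of MV-algebras between A and the unit segment [0, (1,0)] of Chang's group A*. -/
namespace Chang

open Classical

variable {A : Type*} [MVAlgebra A]

/-- The MV-sum on the segment `Γ(A*, u)`: `p ⊕ q = u ⊓ (p + q)`. -/
noncomputable def segOplus (p q : ℤ × A) : ℤ × A :=
  if lexLe unit (add p q) then unit else add p q

/-- The MV-negation on the segment `Γ(A*, u)`: `¬p = u - p`. -/
noncomputable def segNeg (p : ℤ × A) : ℤ × A := add unit (neg p)

/-- The map `ι : A → Γ(A*, u)`, `ι(a) = (0, a)` (normalized, so `ι(1) = (1,0)`). -/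
noncomputable def iota (a : A) : ℤ × A := norm ((0 : ℤ), a)

end Chang

section MyHelpers
open MVAlgebra Chang

variable {A : Type*} [MVAlgebra A]

lemma my_not_one : mvnot (one : A) = zero := mvnot_mvnot zero

lemma my_zero_not : mvnot (zero : A) = one := rfl

lemma my_oplus_one (a : A) : oplus a one = one := oplus_one a

lemma my_one_oplus (a : A) : oplus one a = one := by rw [oplus_comm]; exact oplus_one a

lemma my_oplus_zero (a : A) : oplus a zero = a := by rw [oplus_comm]; exact zero_oplus a

lemma my_not_oplus_self (a : A) : oplus (mvnot a) a = one := by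
  have h := luk a (one : A)
  simp only [my_oplus_one, my_not_one, zero_oplus] at h
  exact h.symm

lemma my_mvle_refl (a : A) : mvle a a := my_not_oplus_self a

lemma my_mvle_zero (a : A) : mvle zero a := by
  show oplus (mvnot zero) a = one
  rw [my_zero_not]; exact my_one_oplus a

lemma my_mvle_one (a : A) : mvle a one := my_oplus_one _

lemma my_mvle_zero_right {a : A} (h : mvle a zero) : a = zero := by
  have h' : oplus (mvnot a) zero = one := h
  rw [my_oplus_zero] at h'
  rw [← mvnot_mvnot a, h', my_not_one]

lemma my_iota_of_ne {a : A} (ha : a ≠ one) : iota a = ((0 : ℤ), a) := by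
  simp [iota, Chang.norm, ha]

lemma my_iota_one : iota (one : A) = unit := by
  simp [iota, Chang.norm, unit]

end MyHelpers

open MVAlgebra Chang in
/-- `ι : A → Γ(A*, u)`, `ι(a) = (0,a)`, is an isomorphism of MV-algebras between
the MV-chain `A` and the unit segment `[0, (1,0)]` of Chang's group `A*`. -/
theorem iota_is_MV_isomorphism (A : Type*) [MVAlgebra A]
    (hchain : ∀ a b : A, mvle a b ∨ mvle b a)
    (h01 : (zero : A) ≠ one) :
    -- ι takes values in the segment Γ(A*, u)
    (∀ a : A, iota a ∈ S A ∧ lexLe zeroEl (iota a) ∧ lexLe (iota a) unit) ∧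
    -- ι is injective
    (∀ a b : A, iota a = iota b → a = b) ∧
    -- ι is surjective onto the segment
    (∀ p ∈ S A, lexLe zeroEl p → lexLe p unit → ∃ a : A, iota a = p) ∧
    -- ι is a morphism of MV-algebras
    (iota (zero : A) = zeroEl) ∧
    (∀ a b : A, iota (oplus a b) = segOplus (iota a) (iota b)) ∧
    (∀ a : A, iota (mvnot a) = segNeg (iota a)) := by
  refine ⟨?_, ?_, ?_, ?_, ?_, ?_⟩
  · -- values in the segment
    intro a
    by_cases ha : a = one
    · subst ha
      rw [my_iota_one]
      refine ⟨?_, ?_, ?_⟩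
      · exact h01
      · exact Or.inl (by norm_num [zeroEl, unit])
      · exact Or.inr ⟨rfl, my_mvle_refl _⟩
    · rw [my_iota_of_ne ha]
      exact ⟨ha, Or.inr ⟨rfl, my_mvle_zero a⟩, Or.inl (by norm_num [unit])⟩
  · -- injective
    intro a b h
    by_cases ha : a = one <;> by_cases hb : b = one
    · rw [ha, hb]
    · rw [ha, my_iota_one, my_iota_of_ne hb] at h
      have := congrArg Prod.fst h
      norm_num [unit] at this
    · rw [hb, my_iota_one, my_iota_of_ne ha] at h
      have := congrArg Prod.fst h
      norm_num [unit] at this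
    · rw [my_iota_of_ne ha, my_iota_of_ne hb] at h
      exact congrArg Prod.snd h
  · -- surjective onto the segment
    rintro ⟨m, c⟩ hp h0 h1
    have hc : c ≠ one := hp
    simp only [lexLe, zeroEl, unit] at h0 h1
    have hm0 : (0 : ℤ) ≤ m := by
      rcases h0 with h | h
      exacts [le_of_lt h, le_of_eq h.1]
    have hm1 : m ≤ 1 := by
      rcases h1 with h | h
      exacts [le_of_lt h, le_of_eq h.1]
    interval_cases m
    · exact ⟨c, my_iota_of_ne hc⟩
    · rcases h1 with h | h
      · omega
      · have hc0 : c = zero := my_mvle_zero_right h.2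
        exact ⟨one, by rw [my_iota_one, hc0]; rfl⟩
  · -- iota zero
    rw [my_iota_of_ne h01]; rfl
  · -- morphism: oplus
    intro a b
    by_cases ha : a = one
    · subst ha
      rw [my_one_oplus, my_iota_one]
      by_cases hb : b = one
      · subst hb
        rw [my_iota_one]
        norm_num [segOplus, add, unit, lexLe, zero_oplus, h01]
      · rw [my_iota_of_ne hb]
        norm_num [segOplus, add, unit, lexLe, zero_oplus, hb, my_mvle_zero]
    · by_cases hb : b = one
      · subst hb
        rw [my_oplus_one, my_iota_one, my_iota_of_ne ha]
        norm_num [segOplus, add, unit, lexLe, my_oplus_zero, ha, my_mvle_zero]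
      · rw [my_iota_of_ne ha, my_iota_of_ne hb]
        by_cases hab : oplus a b = one
        · rw [hab, my_iota_one]
          norm_num [segOplus, add, unit, lexLe, hab, my_mvle_zero]
        · rw [my_iota_of_ne hab]
          norm_num [segOplus, add, unit, lexLe, hab]
  · -- morphism: negation
    intro a
    by_cases ha : a = one
    · subst ha
      rw [my_not_one, my_iota_of_ne h01, my_iota_one]
      norm_num [segNeg, neg, Chang.norm, add, unit, my_zero_not, zero_oplus, h01]
    · by_cases hma : mvnot a = one
      · have ha0 : a = zero := by rw [← mvnot_mvnot a, hma, my_not_one]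
        subst ha0
        rw [my_zero_not, my_iota_one, my_iota_of_ne h01]
        norm_num [segNeg, neg, Chang.norm, add, unit, my_zero_not, zero_oplus, h01]
      · rw [my_iota_of_ne hma, my_iota_of_ne ha]
        norm_num [segNeg, neg, Chang.norm, add, unit, zero_oplus, hma]
end

section
/- Let (G,u) be a totally ordered abelian group with strong unit u. The map υ : Γ(G,u)* → G defined by υ(m,a) = m • u + a is an isomorphism of ordered groups, with inverse x ↦ (n_x, x - n_x • u) where n_x is the unique integer with n_x • u ≤ x < (n_x + 1) • u. -/
namespace ChangSeg

variable {G : Type*} [AddCommGroup G] [LinearOrder G] [IsOrderedAddMonoid G]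

/-- The carrier of Chang's group on the segment `Γ(G,u)`: pairs `(m, a)` with
`a ∈ [0,u)` (i.e. `a ∈ Γ(G,u)`, `a ≠ u`). -/
def S (u : G) : Set (ℤ × G) := {p | 0 ≤ p.2 ∧ p.2 < u}

/-- Chang's addition on `ℤ × Γ(G,u)`: `(m,a)+(n,b) = (m+n, a ⊕ b)` if
`a ⊕ b < 1` (i.e. `a + b < u`), and `(m+n+1, a ⊙ b)` if `a ⊕ b = 1`
(i.e. `u ≤ a + b`, in which case `a ⊙ b = a + b - u`). -/
noncomputable def add (u : G) (p q : ℤ × G) : ℤ × G :=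
  if u ≤ p.2 + q.2 then (p.1 + q.1 + 1, p.2 + q.2 - u) else (p.1 + q.1, p.2 + q.2)

/-- The lexicographic order. -/
def lexLe (p q : ℤ × G) : Prop := p.1 < q.1 ∨ (p.1 = q.1 ∧ p.2 ≤ q.2)

/-- The map `υ : Γ(G,u)* → G`, `υ(m,a) = m • u + a`. -/
def upsilon (u : G) (p : ℤ × G) : G := p.1 • u + p.2

end ChangSeg


/-!
Since `a ∈ [0, u)`, the element `υ(m, a) = m • u + a` lies in `[m • u, (m + 1) • u)`. These
intervals are disjoint, ordered like `ℤ`, and (because `u` is a strong unit) cover `G`; hence `υ`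
is an order-preserving bijection, with the lexicographic order on the left. Additivity holds
because the carry in Chang's addition trades `u` in the second coordinate for `1` in the first.
-/

namespace ChangSeg

theorem lexLe_antisymm {G : Type*} [LinearOrder G] {p q : ℤ × G} (h₁ : lexLe p q)
    (h₂ : lexLe q p) : p = q := by
  rcases h₁ with h₁ | ⟨h₁, h₁'⟩ <;> rcases h₂ with h₂ | ⟨h₂, h₂'⟩
  · omega
  · omega
  · omega
  · exact Prod.ext h₁ (le_antisymm h₁' h₂')

theorem upsilon_mk_sub_zsmul {G : Type*} [AddCommGroup G] (u : G) (n : ℤ) (x : G) :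
    upsilon u (n, x - n • u) = x :=
  add_sub_cancel _ _

variable {G : Type*} [AddCommGroup G] [LinearOrder G] {u : G}

theorem upsilon_add (p q : ℤ × G) : upsilon u (add u p q) = upsilon u p + upsilon u q := by
  unfold add upsilon
  split_ifs
  · simp only [add_zsmul, one_zsmul]
    abel
  · simp only [add_zsmul]
    abel

variable [IsOrderedAddMonoid G]

theorem add_mem_S {p q : ℤ × G} (hp : p ∈ S u) (hq : q ∈ S u) : add u p q ∈ S u := by
  unfold add
  split_ifs with h
  · exact ⟨sub_nonneg.mpr h, sub_lt_iff_lt_add.mpr (add_lt_add hp.2 hq.2)⟩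
  · exact ⟨add_nonneg hp.1 hq.1, not_le.mp h⟩

theorem mk_sub_zsmul_mem_S {n : ℤ} {x : G} (h₁ : n • u ≤ x) (h₂ : x < (n + 1) • u) :
    (n, x - n • u) ∈ S u := by
  rw [add_zsmul, one_zsmul] at h₂
  exact ⟨sub_nonneg.mpr h₁, sub_lt_iff_lt_add'.mpr h₂⟩

theorem upsilon_lt_upsilon_of_fst_lt {p q : ℤ × G} (hp : p ∈ S u) (hq : q ∈ S u)
    (h : p.1 < q.1) : upsilon u p < upsilon u q := by
  have hu : 0 ≤ u := hq.1.trans hq.2.le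
  calc p.1 • u + p.2 < (p.1 + 1) • u := by rw [add_zsmul, one_zsmul]; exact add_lt_add_right hp.2 _
    _ ≤ q.1 • u := zsmul_le_zsmul_left hu (Int.add_one_le_of_lt h)
    _ ≤ q.1 • u + q.2 := le_add_of_nonneg_right hq.1

theorem lexLe_iff_upsilon_le {p q : ℤ × G} (hp : p ∈ S u) (hq : q ∈ S u) :
    lexLe p q ↔ upsilon u p ≤ upsilon u q := by
  constructor
  · rintro (h | ⟨h₁, h₂⟩)
    · exact (upsilon_lt_upsilon_of_fst_lt hp hq h).le
    · unfold upsilon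
      rw [h₁]
      exact add_le_add_right h₂ _
  · intro h
    rcases lt_trichotomy p.1 q.1 with h₁ | h₁ | h₁
    · exact Or.inl h₁
    · unfold upsilon at h
      rw [h₁] at h
      exact Or.inr ⟨h₁, le_of_add_le_add_left h⟩
    · exact absurd h (upsilon_lt_upsilon_of_fst_lt hq hp h₁).not_ge

theorem eq_of_upsilon_eq {p q : ℤ × G} (hp : p ∈ S u) (hq : q ∈ S u)
    (h : upsilon u p = upsilon u q) : p = q :=
  lexLe_antisymm ((lexLe_iff_upsilon_le hp hq).mpr h.le) ((lexLe_iff_upsilon_le hq hp).mpr h.ge)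

/-- Cf. `existsUnique_zsmul_near_of_pos`, which assumes `Archimedean G`: bounding `±x` by multiples
of `u` is all its proof needs. -/
theorem existsUnique_zsmul_near_of_strongUnit (hu : 0 < u) (hsu : ∀ x : G, ∃ k : ℕ, x ≤ k • u)
    (x : G) : ∃! n : ℤ, n • u ≤ x ∧ x < (n + 1) • u := by
  obtain ⟨k, hk⟩ := hsu (-x)
  have h_ne : ∃ n : ℤ, n • u ≤ x := ⟨-k, by rw [neg_zsmul, natCast_zsmul]; exact neg_le.mp hk⟩
  obtain ⟨l, hl⟩ := hsu x
  have h_bdd : ∀ n : ℤ, n • u ≤ x → n ≤ l := fun n hn =>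
    (zsmul_le_zsmul_iff_left hu).mp (hn.trans (by rwa [natCast_zsmul]))
  obtain ⟨m, hm_le, hm_max⟩ := Int.exists_greatest_of_bdd ⟨l, h_bdd⟩ h_ne
  have hm_lt : x < (m + 1) • u := by
    contrapose! hm_max
    exact ⟨m + 1, hm_max, lt_add_one _⟩
  refine ⟨m, ⟨hm_le, hm_lt⟩, fun n hn => (hm_max n hn.1).antisymm <| Int.le_of_lt_add_one ?_⟩
  exact (zsmul_lt_zsmul_iff_left hu).mp (hm_le.trans_lt hn.2)

end ChangSeg

open ChangSeg in
/-- For a totally ordered abelian group with strong unit `(G,u)`, the map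
`υ(m,a) = m • u + a` is an isomorphism of ordered groups from Chang's group
`Γ(G,u)*` onto `G`, with inverse `x ↦ (n_x, x - n_x • u)` where `n_x` is the
unique integer with `n_x • u ≤ x < (n_x + 1) • u`. -/
theorem upsilon_is_ordered_group_isomorphism {G : Type*} [AddCommGroup G] [LinearOrder G] [IsOrderedAddMonoid G]
    (u : G) (hu : 0 < u) (hsu : ∀ x : G, ∃ k : ℕ, x ≤ k • u) :
    -- Chang's group is closed under addition
    (∀ p ∈ S u, ∀ q ∈ S u, add u p q ∈ S u) ∧
    -- υ is additive
    (∀ p ∈ S u, ∀ q ∈ S u, upsilon u (add u p q) = upsilon u p + upsilon u q) ∧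
    -- υ is injective
    (∀ p ∈ S u, ∀ q ∈ S u, upsilon u p = upsilon u q → p = q) ∧
    -- υ is surjective, with the explicit inverse x ↦ (n_x, x - n_x • u)
    (∀ x : G, ∃! n : ℤ, n • u ≤ x ∧ x < (n + 1) • u) ∧
    (∀ x : G, ∀ n : ℤ, n • u ≤ x → x < (n + 1) • u →
        ((n, x - n • u) ∈ S u ∧ upsilon u (n, x - n • u) = x)) ∧
    -- υ is an order isomorphism
    (∀ p ∈ S u, ∀ q ∈ S u, (lexLe p q ↔ upsilon u p ≤ upsilon u q)) :=
  ⟨fun _ hp _ hq => add_mem_S hp hq,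
   fun p _ q _ => upsilon_add p q,
   fun _ hp _ hq => eq_of_upsilon_eq hp hq,
   existsUnique_zsmul_near_of_strongUnit hu hsu,
   fun x n h₁ h₂ => ⟨mk_sub_zsmul_mem_S h₁ h₂, upsilon_mk_sub_zsmul u n x⟩,
   fun _ hp _ hq => lexLe_iff_upsilon_le hp hq⟩
end

section
/- Let A ⊆ [0,u] ⊆ G be a sub-MV-algebra of the segment of an abelian l-group G, and let A* be the subgroup generated by A, with the induced lattice order. Then (A*, u) is an abelian l-group with strong unit u: A* is closed under the lattice operations ⊓ and ⊔ of G, and u is a strong unit for A*. -/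
/-!
Write `M` for the additive monoid generated by `A`. Since `A` is closed under the truncated
difference `(a - b)⁺ = ¬(¬a ⊕ b)`, the identity `(a + r - b)⁺ = (a - b)⁺ + (r - (b - a)⁺)⁺`
(for `r ≥ 0`) shows by induction on the length of a sum that `(s - b)⁺ ∈ M` for `s ∈ M` and
`b ∈ A`, and hence `(s - t)⁺ ∈ M` for all `s, t ∈ M`. Every element of `A*` is such a
difference `s - t`, so `A*` is closed under `x ↦ x⁺`, and therefore under
`x ⊔ y = y + (x - y)⁺` and `x ⊓ y = x - (x - y)⁺`. Finally `|a| ≤ u` on `A`, and the elements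
with `|x| ≤ n • u` for some `n` form a subgroup.
-/

lemma AddSubgroup.mem_closure_iff_exists_sub {G : Type*} [AddCommGroup G] {s : Set G} {x : G} :
    x ∈ AddSubgroup.closure s ↔
      ∃ p ∈ AddSubmonoid.closure s, ∃ q ∈ AddSubmonoid.closure s, x = p - q := by
  constructor
  · intro hx
    induction hx using AddSubgroup.closure_induction with
    | mem a ha => exact ⟨a, AddSubmonoid.subset_closure ha, 0, zero_mem _, (sub_zero a).symm⟩
    | zero => exact ⟨0, zero_mem _, 0, zero_mem _, (sub_zero 0).symm⟩
    | add x y _ _ hx hy =>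
      obtain ⟨p, hp, q, hq, rfl⟩ := hx
      obtain ⟨p', hp', q', hq', rfl⟩ := hy
      exact ⟨p + p', add_mem hp hp', q + q', add_mem hq hq', by abel⟩
    | neg x _ hx =>
      obtain ⟨p, hp, q, hq, rfl⟩ := hx
      exact ⟨q, hq, p, hp, neg_sub p q⟩
  · rintro ⟨p, hp, q, hq, rfl⟩
    have hle : AddSubmonoid.closure s ≤ (AddSubgroup.closure s).toAddSubmonoid :=
      AddSubmonoid.closure_le.2 AddSubgroup.subset_closure
    exact sub_mem (hle hp) (hle hq)

section LatticeOrderedGroup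

variable {G : Type*} [Lattice G] [AddCommGroup G] [AddLeftMono G]

lemma posPart_sub_eq_sub_inf (a b : G) : (a - b)⁺ = a - a ⊓ b := by
  rw [inf_eq_sub_posPart_sub, sub_sub_cancel]

lemma posPart_add_of_nonneg (a : G) {r : G} (hr : 0 ≤ r) : (a + r)⁺ = a⁺ + (r - a⁻)⁺ := by
  have ha : a ≤ a + r := le_add_of_nonneg_right hr
  calc (a + r)⁺ = (a + r) ⊔ (a ⊔ 0) := by rw [← sup_assoc, sup_eq_left.2 ha, posPart_def]
    _ = a⁺ + (r - a⁻)⁺ := by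
      rw [posPart_def (r - a⁻), add_sup, add_zero, ← add_sub_assoc, add_sub_right_comm,
        posPart_sub_negPart, posPart_def]

lemma posPart_posPart_sub_of_nonneg (a : G) {b : G} (hb : 0 ≤ b) : (a⁺ - b)⁺ = (a - b)⁺ := by
  rw [posPart_def a, sup_sub, posPart_def, posPart_def, sup_assoc, zero_sub,
    sup_eq_right.2 (neg_nonpos.2 hb)]

lemma AddSubgroup.sup_mem_of_posPart_mem {H : AddSubgroup G} (hH : ∀ x ∈ H, x⁺ ∈ H)
    {x y : G} (hx : x ∈ H) (hy : y ∈ H) : x ⊔ y ∈ H := by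
  rw [sup_eq_add_posPart_sub]
  exact add_mem hy (hH _ (sub_mem hx hy))

lemma AddSubgroup.inf_mem_of_posPart_mem {H : AddSubgroup G} (hH : ∀ x ∈ H, x⁺ ∈ H)
    {x y : G} (hx : x ∈ H) (hy : y ∈ H) : x ⊓ y ∈ H := by
  rw [inf_eq_sub_posPart_sub]
  exact sub_mem hx (hH _ (sub_mem hx hy))

/-- `u` is a strong unit of a subgroup `H` exactly when `H ≤ boundedSubgroup u`. -/
def boundedSubgroup (u : G) : AddSubgroup G where
  carrier := {x | ∃ n : ℕ, |x| ≤ n • u}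
  zero_mem' := ⟨0, by simp⟩
  add_mem' := by
    rintro x y ⟨m, hm⟩ ⟨n, hn⟩
    exact ⟨m + n, (abs_add_le x y).trans (add_nsmul u m n ▸ add_le_add hm hn)⟩
  neg_mem' := by
    rintro x ⟨n, hn⟩
    exact ⟨n, (abs_neg x).trans_le hn⟩

lemma mem_boundedSubgroup {u x : G} : x ∈ boundedSubgroup u ↔ ∃ n : ℕ, |x| ≤ n • u := Iff.rfl

lemma nonneg_of_mem_addSubmonoidClosure {A : Set G} (hA : ∀ a ∈ A, 0 ≤ a) {s : G}
    (hs : s ∈ AddSubmonoid.closure A) : 0 ≤ s :=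
  AddSubmonoid.closure_le (S := AddSubmonoid.nonneg G).2 hA hs

end LatticeOrderedGroup

section SubMVAlgebra

variable {G : Type*} [Lattice G] [AddCommGroup G] [AddLeftMono G] {u : G} {A : Set G}

lemma posPart_sub_mem_of_subMV (hoplus : ∀ a ∈ A, ∀ b ∈ A, u ⊓ (a + b) ∈ A)
    (hneg : ∀ a ∈ A, u - a ∈ A) {a b : G} (ha : a ∈ A) (hb : b ∈ A) : (a - b)⁺ ∈ A := by
  have h : (a - b)⁺ = u - u ⊓ (u - a + b) := by
    rw [← posPart_sub_eq_sub_inf, sub_add_eq_sub_sub, sub_sub_cancel]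
  exact h ▸ hneg _ (hoplus _ (hneg a ha) b hb)

lemma addSubgroupClosure_le_boundedSubgroup (hA : A ⊆ Set.Icc 0 u) :
    AddSubgroup.closure A ≤ boundedSubgroup u :=
  (AddSubgroup.closure_le _).2 fun a ha =>
    ⟨1, by rw [one_nsmul, abs_of_nonneg (hA ha).1]; exact (hA ha).2⟩

variable (hA : A ⊆ Set.Icc 0 u) (hoplus : ∀ a ∈ A, ∀ b ∈ A, u ⊓ (a + b) ∈ A)
  (hneg : ∀ a ∈ A, u - a ∈ A)
include hA hoplus hneg

lemma posPart_sub_mem_addSubmonoidClosure_of_mem {s b : G}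
    (hs : s ∈ AddSubmonoid.closure A) (hb : b ∈ A) :
    (s - b)⁺ ∈ AddSubmonoid.closure A := by
  induction hs using AddSubmonoid.closure_induction_left generalizing b with
  | zero =>
    rw [zero_sub, posPart_eq_zero.2 (neg_nonpos.2 (hA hb).1)]
    exact zero_mem _
  | add_left a ha r hr ih =>
    have hr₀ : 0 ≤ r := nonneg_of_mem_addSubmonoidClosure (fun x hx => (hA hx).1) hr
    have hneg_part : (a - b)⁻ = (b - a)⁺ := by rw [← posPart_neg, neg_sub]
    rw [add_sub_right_comm, posPart_add_of_nonneg _ hr₀, hneg_part]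
    exact add_mem (AddSubmonoid.subset_closure (posPart_sub_mem_of_subMV hoplus hneg ha hb))
      (ih (posPart_sub_mem_of_subMV hoplus hneg hb ha))

lemma posPart_sub_mem_addSubmonoidClosure {s t : G}
    (hs : s ∈ AddSubmonoid.closure A) (ht : t ∈ AddSubmonoid.closure A) :
    (s - t)⁺ ∈ AddSubmonoid.closure A := by
  induction ht using AddSubmonoid.closure_induction_left with
  | zero =>
    rwa [sub_zero, posPart_eq_self.2 (nonneg_of_mem_addSubmonoidClosure (fun x hx => (hA hx).1) hs)]
  | add_left b hb t _ ih =>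
    rw [sub_add_eq_sub_sub_swap, ← posPart_posPart_sub_of_nonneg _ (hA hb).1]
    exact posPart_sub_mem_addSubmonoidClosure_of_mem hA hoplus hneg ih hb

lemma posPart_mem_addSubgroupClosure {x : G} (hx : x ∈ AddSubgroup.closure A) :
    x⁺ ∈ AddSubgroup.closure A := by
  obtain ⟨p, hp, q, hq, rfl⟩ := AddSubgroup.mem_closure_iff_exists_sub.1 hx
  exact AddSubgroup.mem_closure_iff_exists_sub.2
    ⟨_, posPart_sub_mem_addSubmonoidClosure hA hoplus hneg hp hq, 0, zero_mem _, (sub_zero _).symm⟩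

end SubMVAlgebra

theorem subMV_closure_is_lu_group_general {G : Type*} [Lattice G] [AddCommGroup G]
    [CovariantClass G G (· + ·) (· ≤ ·)] (u : G)
    (A : Set G) (hA : A ⊆ Set.Icc (0 : G) u)
    (hoplus : ∀ a ∈ A, ∀ b ∈ A, u ⊓ (a + b) ∈ A)
    (hneg : ∀ a ∈ A, u - a ∈ A) :
    (∀ x ∈ AddSubgroup.closure A, ∀ y ∈ AddSubgroup.closure A,
        x ⊔ y ∈ AddSubgroup.closure A ∧ x ⊓ y ∈ AddSubgroup.closure A) ∧
    (∀ x ∈ AddSubgroup.closure A, ∃ n : ℕ, x ⊔ (-x) ≤ n • u) := by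
  have hpos := fun x (hx : x ∈ AddSubgroup.closure A) =>
    posPart_mem_addSubgroupClosure hA hoplus hneg hx
  refine ⟨fun x hx y hy => ⟨AddSubgroup.sup_mem_of_posPart_mem hpos hx hy,
    AddSubgroup.inf_mem_of_posPart_mem hpos hx hy⟩, fun x hx => ?_⟩
  exact mem_boundedSubgroup.1 (addSubgroupClosure_le_boundedSubgroup hA hx)

/-- If `A` is a sub-MV-algebra of the segment `[0,u]` of an abelian l-group `G`,
then the subgroup `A*` generated by `A` is closed under the lattice operations
of `G`, and `u` is a strong unit for `A*`. -/
theorem subMV_closure_is_lu_group {G : Type*} [Lattice G] [AddCommGroup G]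
    [CovariantClass G G (· + ·) (· ≤ ·)] (u : G) (hu : 0 < u)
    (A : Set G) (hA : A ⊆ Set.Icc (0 : G) u)
    (h0 : (0 : G) ∈ A) (h1 : u ∈ A)
    (hoplus : ∀ a ∈ A, ∀ b ∈ A, u ⊓ (a + b) ∈ A)
    (hneg : ∀ a ∈ A, u - a ∈ A) :
    (∀ x ∈ AddSubgroup.closure A, ∀ y ∈ AddSubgroup.closure A,
        x ⊔ y ∈ AddSubgroup.closure A ∧ x ⊓ y ∈ AddSubgroup.closure A) ∧
    (∀ x ∈ AddSubgroup.closure A, ∃ n : ℕ, x ⊔ (-x) ≤ n • u) :=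
  subMV_closure_is_lu_group_general u A hA hoplus hneg
end
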